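/- The operator S_C is self-adjoint with respect to the L² inner product: for all u₁, u₂ ∈ X̃²_C, ∫_{−1/2}^{1/2} u₂ (u₁'' − φ₁'') dx = ∫_{−1/2}^{1/2} u₁ (u₂'' − φ₂'') dx, where φᵢ = φ[uᵢ] for i = 1,2. -/

import Mathlib

open MeasureTheory Filter Set

noncomputable section

/-- The open interval (-1/2, 1/2). -/
def Iv : Set ℝ := Set.Ioo (-(1/2) : ℝ) (1/2)

/-- The closed interval [-1/2, 1/2]. -/
def Jv : Set ℝ := Set.Icc (-(1/2) : ℝ) (1/2)

/-- L² norm on (-1/2, 1/2). -/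
def L2n (f : ℝ → ℝ) : ℝ := Real.sqrt (∫ x in Iv, (f x) ^ 2)

/-- H¹ norm on (-1/2, 1/2). -/
def H1n (f : ℝ → ℝ) : ℝ := Real.sqrt (∫ x in Iv, ((f x) ^ 2 + (deriv f x) ^ 2))

/-- φ = φ[u]: the solution of -Z φ'' + φ = P u on (-1/2,1/2) with periodic
boundary conditions. -/
def IsPhi (Z P : ℝ) (u φ : ℝ → ℝ) : Prop :=
  ContDiff ℝ 2 φ ∧
  (∀ x ∈ Jv, -Z * deriv (deriv φ) x + φ x = P * u x) ∧
  φ (-(1/2)) = φ (1/2) ∧ deriv φ (-(1/2)) = deriv φ (1/2)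

/-- Membership in X̃²_C : H² with Neumann boundary conditions and zero mean. -/
def MemX2t (u : ℝ → ℝ) : Prop :=
  ContDiff ℝ 2 u ∧ deriv u (-(1/2)) = 0 ∧ deriv u (1/2) = 0 ∧ (∫ x in Iv, u x) = 0

/-!
Both parts of `S_C` are symmetric for the pairing `⟨v, w⟩ = ∫ v w`. For `u ↦ u''` this is
Green's identity, the boundary terms vanishing by the Neumann conditions. For `u ↦ φ[u]''`,
substituting `P u₂ = -Z φ₂'' + φ₂` and integrating `φ₂ φ₁''` by parts (the boundary term
vanishes by periodicity) gives `P ∫ u₂ φ₁'' = -Z ∫ φ₂'' φ₁'' - ∫ φ₂' φ₁'`, which is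
symmetric in the indices; dividing by `P ≠ 0` concludes.
-/

section IntegrationByParts

variable {f g : ℝ → ℝ}

lemma ContDiff.continuous_deriv_deriv (hf : ContDiff ℝ 2 f) : Continuous (deriv (deriv f)) :=
  (hf.deriv' (n := 1)).continuous_deriv le_rfl

lemma intervalIntegrable_mul_deriv_deriv (hf : Continuous f) (hg : ContDiff ℝ 2 g) (a b : ℝ) :
    IntervalIntegrable (fun x => f x * deriv (deriv g) x) volume a b :=
  (hf.mul hg.continuous_deriv_deriv).intervalIntegrable a b

lemma integral_mul_deriv_deriv (hf : ContDiff ℝ 2 f) (hg : ContDiff ℝ 2 g) (a b : ℝ) :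
    ∫ x in a..b, f x * deriv (deriv g) x
      = f b * deriv g b - f a * deriv g a - ∫ x in a..b, deriv f x * deriv g x :=
  intervalIntegral.integral_mul_deriv_eq_deriv_mul
    (fun x _ => (hf.differentiable two_ne_zero x).hasDerivAt)
    (fun x _ => ((hg.deriv' (n := 1)).differentiable one_ne_zero x).hasDerivAt)
    ((hf.continuous_deriv one_le_two).intervalIntegrable a b)
    (hg.continuous_deriv_deriv.intervalIntegrable a b)

lemma integral_mul_deriv_deriv_comm_of_neumann {a b : ℝ} (hf : ContDiff ℝ 2 f)
    (hg : ContDiff ℝ 2 g) (hfa : deriv f a = 0) (hfb : deriv f b = 0)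
    (hga : deriv g a = 0) (hgb : deriv g b = 0) :
    ∫ x in a..b, f x * deriv (deriv g) x = ∫ x in a..b, g x * deriv (deriv f) x := by
  rw [integral_mul_deriv_deriv hf hg, integral_mul_deriv_deriv hg hf, hfa, hfb, hga, hgb]
  simp only [mul_zero, sub_zero, mul_comm (deriv f _)]

end IntegrationByParts

section HelmholtzSolution

variable {Z P a b : ℝ} {u φ ψ : ℝ → ℝ}

lemma mul_integral_mul_deriv_deriv_of_solution (hφ : ContDiff ℝ 2 φ) (hψ : ContDiff ℝ 2 ψ)
    (hab : a ≤ b) (heq : ∀ x ∈ Icc a b, -Z * deriv (deriv ψ) x + ψ x = P * u x)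
    (hψ_per : ψ a = ψ b) (hφ_per : deriv φ a = deriv φ b) :
    P * ∫ x in a..b, u x * deriv (deriv φ) x
      = -Z * (∫ x in a..b, deriv (deriv ψ) x * deriv (deriv φ) x)
        - ∫ x in a..b, deriv ψ x * deriv φ x := by
  have hsubst : P * ∫ x in a..b, u x * deriv (deriv φ) x
      = ∫ x in a..b, -Z * (deriv (deriv ψ) x * deriv (deriv φ) x) + ψ x * deriv (deriv φ) x := by
    rw [← intervalIntegral.integral_const_mul]
    refine intervalIntegral.integral_congr fun x hx => ?_
    rw [uIcc_of_le hab] at hx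
    linear_combination (-deriv (deriv φ) x) * heq x hx
  have hint : IntervalIntegrable (fun x => -Z * (deriv (deriv ψ) x * deriv (deriv φ) x))
      volume a b :=
    (intervalIntegrable_mul_deriv_deriv hψ.continuous_deriv_deriv hφ a b).const_mul _
  rw [hsubst, intervalIntegral.integral_add hint
      (intervalIntegrable_mul_deriv_deriv hψ.continuous hφ a b),
    intervalIntegral.integral_const_mul, integral_mul_deriv_deriv hψ hφ, hψ_per, hφ_per]
  ring

lemma integral_mul_deriv_deriv_comm_of_solution (hP : P ≠ 0) {u₁ u₂ φ₁ φ₂ : ℝ → ℝ}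
    (hφ₁ : ContDiff ℝ 2 φ₁) (hφ₂ : ContDiff ℝ 2 φ₂) (hab : a ≤ b)
    (heq₁ : ∀ x ∈ Icc a b, -Z * deriv (deriv φ₁) x + φ₁ x = P * u₁ x)
    (heq₂ : ∀ x ∈ Icc a b, -Z * deriv (deriv φ₂) x + φ₂ x = P * u₂ x)
    (hφ₁_per : φ₁ a = φ₁ b) (hφ₂_per : φ₂ a = φ₂ b)
    (hφ₁'_per : deriv φ₁ a = deriv φ₁ b) (hφ₂'_per : deriv φ₂ a = deriv φ₂ b) :
    ∫ x in a..b, u₂ x * deriv (deriv φ₁) x = ∫ x in a..b, u₁ x * deriv (deriv φ₂) x := by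
  refine mul_left_cancel₀ hP ?_
  rw [mul_integral_mul_deriv_deriv_of_solution hφ₁ hφ₂ hab heq₂ hφ₂_per hφ₁'_per,
    mul_integral_mul_deriv_deriv_of_solution hφ₂ hφ₁ hab heq₁ hφ₁_per hφ₂'_per]
  simp only [mul_comm (deriv (deriv φ₂) _), mul_comm (deriv φ₂ _)]

end HelmholtzSolution

lemma setIntegral_Iv_eq_intervalIntegral (f : ℝ → ℝ) :
    ∫ x in Iv, f x = ∫ x in (-(1/2) : ℝ)..(1/2), f x := by
  rw [intervalIntegral.integral_of_le (by norm_num), integral_Ioc_eq_integral_Ioo]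
  rfl

theorem SC_self_adjoint_general
    (Z P : ℝ) (hP : 0 < P)
    (u₁ u₂ φ₁ φ₂ : ℝ → ℝ)
    (hu₁ : MemX2t u₁) (hu₂ : MemX2t u₂)
    (hφ₁ : IsPhi Z P u₁ φ₁) (hφ₂ : IsPhi Z P u₂ φ₂) :
    ∫ x in Iv, u₂ x * (deriv (deriv u₁) x - deriv (deriv φ₁) x)
      = ∫ x in Iv, u₁ x * (deriv (deriv u₂) x - deriv (deriv φ₂) x) := by
  obtain ⟨hu₁, hu₁a, hu₁b, -⟩ := hu₁
  obtain ⟨hu₂, hu₂a, hu₂b, -⟩ := hu₂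
  obtain ⟨hφ₁, heq₁, hφ₁_per, hφ₁'_per⟩ := hφ₁
  obtain ⟨hφ₂, heq₂, hφ₂_per, hφ₂'_per⟩ := hφ₂
  simp only [setIntegral_Iv_eq_intervalIntegral, mul_sub]
  rw [intervalIntegral.integral_sub (intervalIntegrable_mul_deriv_deriv hu₂.continuous hu₁ _ _)
      (intervalIntegrable_mul_deriv_deriv hu₂.continuous hφ₁ _ _),
    intervalIntegral.integral_sub (intervalIntegrable_mul_deriv_deriv hu₁.continuous hu₂ _ _)
      (intervalIntegrable_mul_deriv_deriv hu₁.continuous hφ₂ _ _),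
    integral_mul_deriv_deriv_comm_of_neumann hu₂ hu₁ hu₂a hu₂b hu₁a hu₁b,
    integral_mul_deriv_deriv_comm_of_solution hP.ne' hφ₁ hφ₂ (by norm_num) heq₁ heq₂
      hφ₁_per hφ₂_per hφ₁'_per hφ₂'_per]

/-- the linearized operator S_C is self-adjoint with respect to
the L² inner product. -/
theorem SC_self_adjoint
    (Z P : ℝ) (hZ : 0 < Z) (hP : 0 < P)
    (u₁ u₂ φ₁ φ₂ : ℝ → ℝ)
    (hu₁ : MemX2t u₁) (hu₂ : MemX2t u₂)
    (hφ₁ : IsPhi Z P u₁ φ₁) (hφ₂ : IsPhi Z P u₂ φ₂) :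
    ∫ x in Iv, u₂ x * (deriv (deriv u₁) x - deriv (deriv φ₁) x)
      = ∫ x in Iv, u₁ x * (deriv (deriv u₂) x - deriv (deriv φ₂) x) :=
  SC_self_adjoint_general Z P hP u₁ u₂ φ₁ φ₂ hu₁ hu₂ hφ₁ hφ₂
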